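/- arXiv:2603.09510 — 2 statements merged into one kernel-verified Lean document; each statement's English description precedes it below -/
import Mathlib

section
/- Let κ be a regular uncountable cardinal, S ⊆ κ stationary, and C ⊆ κ a club. Suppose for each α ∈ C we have an equivalence relation E_α on κ^κ, each with at most κ classes enumerated as ⟨x^α_i : 0 < i < κ⟩, and suppose an equivalence relation E on κ^κ satisfies: η E ξ iff there is a club D with η E_α ξ for all α ∈ D, and ¬(η E ξ) iff there is a club D with ¬(η E_α ξ) for all α ∈ D. Then the function F : κ^κ → κ^κ defined by F(η)(α) = i if α ∈ C and η ∈ x^α_i, and F(η)(α) = 0 otherwise, is a reduction of E to =^κ_S. -/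
def IsClubIn (κ : Cardinal) (C : Set Ordinal) : Prop :=
  C ⊆ Set.Iio κ.ord ∧
  (∀ α, α < κ.ord → 0 < α → (∀ β, β < α → (C ∩ Set.Ioo β α).Nonempty) → α ∈ C) ∧
  (∀ α, α < κ.ord → ∃ β ∈ C, α ≤ β)

def IsStatIn (κ : Cardinal) (S : Set Ordinal) : Prop :=
  S ⊆ Set.Iio κ.ord ∧ ∀ C, IsClubIn κ C → (S ∩ C).Nonempty

/-- Equivalence modulo `S`: the difference set intersected with `S` is non-stationary. -/
def eqModS (κ : Cardinal) (S : Set Ordinal) (f g : Ordinal → Ordinal) : Prop :=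
  ¬ IsStatIn κ ({α | f α ≠ g α} ∩ S)

/-!
For `α ∈ C` the value `F η α` is the index of the `Eα α`-class of `η`, so `F η` and `F ξ` agree
at `α ∈ C` exactly when `η` and `ξ` are `Eα α`-equivalent. If `E η ξ`, they agree on a club,
so the set where they differ misses a club and is not stationary. Otherwise they differ on a club `D`, and
`S ∩ D` is stationary because, for `κ` regular uncountable, clubs are closed under countable
intersections (the supremum of an `ω`-sequence climbing through them stays below `κ`).
-/

open Cardinal Filter

section Club

universe u

variable {κ : Cardinal.{u}} {D : Set Ordinal.{u}}

theorem IsClubIn.exists_mem_gt (hD : IsClubIn κ D) (hκ : Order.IsSuccLimit κ.ord) {β : Ordinal}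
    (hβ : β < κ.ord) : ∃ γ ∈ D, β < γ ∧ γ < κ.ord := by
  obtain ⟨γ, hγD, hγ⟩ := hD.2.2 (Order.succ β) (hκ.succ_lt hβ)
  exact ⟨γ, hγD, (Order.lt_succ β).trans_le hγ, hD.1 hγD⟩

theorem IsClubIn.iSup_mem (hD : IsClubIn κ D) (hcof : ℵ₀ < κ.ord.cof) {g : ℕ → Ordinal.{u}}
    (hg : StrictMono g) (hgκ : ∀ n, g n < κ.ord) (hgD : ∃ᶠ n in atTop, g n ∈ D) :
    ⨆ n, g n ∈ D := by
  have hlt : ∀ n, g n < ⨆ n, g n := fun n =>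
    (hg n.lt_succ_self).trans_le (Ordinal.le_iSup g (n + 1))
  refine hD.2.1 _ (Ordinal.lift_iSup_lt_of_lt_cof (by simpa using hcof) hgκ)
    (zero_le.trans_lt (hlt 0)) fun β hβ => ?_
  obtain ⟨n, hn⟩ := Ordinal.lt_iSup_iff.1 hβ
  obtain ⟨m, hnm, hmD⟩ := frequently_atTop.1 hgD n
  exact ⟨g m, hmD, hn.trans_le (hg.monotone hnm), hlt m⟩

theorem IsClubIn.iInter {ι : Type*} [Countable ι] [Nonempty ι] {C : ι → Set Ordinal.{u}}
    (hcof : ℵ₀ < κ.ord.cof) (hC : ∀ i, IsClubIn κ (C i)) : IsClubIn κ (⋂ i, C i) := by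
  obtain ⟨e, he⟩ := exists_surjective_nat ι
  have hκ : Order.IsSuccLimit κ.ord := isSuccLimit_ord (hcof.le.trans (Ordinal.cof_ord_le κ))
  refine ⟨fun α hα => (hC (e 0)).1 (Set.mem_iInter.1 hα _), ?_, fun α hα => ?_⟩
  · intro α hα hα0 hacc
    exact Set.mem_iInter.2 fun i => (hC i).2.1 α hα hα0 fun β hβ =>
      (hacc β hβ).mono (Set.inter_subset_inter_left _ (Set.iInter_subset _ i))
  -- Climb above `α`, entering `C (e (Nat.unpair n).1)` at step `n`: every club is entered
  -- cofinally often, so the supremum of the climb lies in all of them.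
  choose! next hnext using fun (n : ℕ) (β : Ordinal) (hβ : β < κ.ord) =>
    (hC (e n.unpair.1)).exists_mem_gt hκ hβ
  let g : ℕ → Ordinal := fun n => Nat.rec α (fun n γ => next n γ) n
  have hgκ : ∀ n, g n < κ.ord := by
    intro n
    induction n with
    | zero => exact hα
    | succ n ih => exact (hnext n _ ih).2.2
  have hg : StrictMono g := strictMono_nat_of_lt_succ fun n => (hnext n _ (hgκ n)).2.1
  refine ⟨⨆ n, g n, Set.mem_iInter.2 fun i => (hC i).iSup_mem hcof hg hgκ ?_, Ordinal.le_iSup g 0⟩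
  obtain ⟨k, rfl⟩ := he i
  refine frequently_atTop.2 fun a => ⟨Nat.pair k a + 1, by grind [Nat.right_le_pair], ?_⟩
  simpa only [Nat.unpair_pair] using (hnext (Nat.pair k a) _ (hgκ _)).1

theorem IsClubIn.inter {C₁ C₂ : Set Ordinal.{u}} (hcof : ℵ₀ < κ.ord.cof) (h₁ : IsClubIn κ C₁)
    (h₂ : IsClubIn κ C₂) : IsClubIn κ (C₁ ∩ C₂) := by
  rw [Set.inter_eq_iInter]
  exact IsClubIn.iInter hcof (Bool.forall_bool.2 ⟨h₂, h₁⟩)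

theorem IsStatIn.inter_club {S : Set Ordinal.{u}} (hcof : ℵ₀ < κ.ord.cof) (hS : IsStatIn κ S)
    (hD : IsClubIn κ D) : IsStatIn κ (S ∩ D) := by
  refine ⟨fun _ h => hS.1 h.1, fun C hC => ?_⟩
  obtain ⟨α, hαS, hαD, hαC⟩ := hS.2 _ (hD.inter hcof hC)
  exact ⟨α, ⟨hαS, hαD⟩, hαC⟩

theorem IsStatIn.mono {S T : Set Ordinal.{u}} (hS : IsStatIn κ S) (hST : S ⊆ T)
    (hT : T ⊆ Set.Iio κ.ord) : IsStatIn κ T :=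
  ⟨hT, fun C hC => (hS.2 C hC).mono (Set.inter_subset_inter_left C hST)⟩

end Club

theorem apply_eq_apply_iff_exists_mem_mem {α ι : Type*} {P : ι → Prop} {x : ι → Set α}
    {f : α → ι} (hcover : ∀ a, ∃ i, P i ∧ a ∈ x i) (hf : ∀ a i, P i → a ∈ x i → f a = i)
    {a b : α} : f a = f b ↔ ∃ i, P i ∧ a ∈ x i ∧ b ∈ x i := by
  constructor
  · intro hab
    obtain ⟨i, hi, hai⟩ := hcover a
    obtain ⟨j, hj, hbj⟩ := hcover b
    obtain rfl : i = j := by rw [← hf a i hi hai, ← hf b j hj hbj, hab]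
    exact ⟨i, hi, hai, hbj⟩
  · rintro ⟨i, hi, hai, hbi⟩
    rw [hf a i hi hai, hf b i hi hbi]

theorem stmt4_general (κ : Cardinal) (hreg : κ.IsRegular) (hunc : Cardinal.aleph0 < κ)
    (S : Set Ordinal) (hS : IsStatIn κ S)
    (C : Set Ordinal)
    (Eα : Ordinal → (Ordinal → Ordinal) → (Ordinal → Ordinal) → Prop)
    (x : Ordinal → Ordinal → Set (Ordinal → Ordinal))
    (hpart : ∀ α ∈ C, ∀ η, ∃! i, 0 < i ∧ i < κ.ord ∧ η ∈ x α i)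
    (hclasses : ∀ α ∈ C, ∀ η ξ, Eα α η ξ ↔ ∃ i, 0 < i ∧ i < κ.ord ∧ η ∈ x α i ∧ ξ ∈ x α i)
    (E : (Ordinal → Ordinal) → (Ordinal → Ordinal) → Prop)
    (hEpos : ∀ η ξ, E η ξ ↔ ∃ D, IsClubIn κ D ∧ D ⊆ C ∧ ∀ α ∈ D, Eα α η ξ)
    (hEneg : ∀ η ξ, ¬ E η ξ ↔ ∃ D, IsClubIn κ D ∧ D ⊆ C ∧ ∀ α ∈ D, ¬ Eα α η ξ)
    (F : (Ordinal → Ordinal) → (Ordinal → Ordinal))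
    (hF : ∀ η α i, α ∈ C → 0 < i → i < κ.ord → η ∈ x α i → F η α = i) :
    ∀ η ξ, E η ξ ↔ eqModS κ S (F η) (F ξ) := by
  intro η ξ
  have hcof : ℵ₀ < κ.ord.cof := by rwa [hreg.cof_ord]
  have hagree : ∀ α ∈ C, F η α = F ξ α ↔ Eα α η ξ := fun α hα => by
    rw [hclasses α hα, apply_eq_apply_iff_exists_mem_mem (P := fun i => 0 < i ∧ i < κ.ord)
      (fun ζ => by simpa only [and_assoc] using (hpart α hα ζ).exists)
      (fun ζ i hi => hF ζ α i hα hi.1 hi.2)]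
    simp only [and_assoc]
  constructor
  · rintro hE ⟨-, hstat⟩
    obtain ⟨D, hD, hDC, hDE⟩ := (hEpos η ξ).1 hE
    obtain ⟨α, ⟨hne, -⟩, hαD⟩ := hstat D hD
    exact hne ((hagree α (hDC hαD)).2 (hDE α hαD))
  · refine fun hmod => by_contra fun hnE => hmod ?_
    obtain ⟨D, hD, hDC, hDE⟩ := (hEneg η ξ).1 hnE
    exact (hS.inter_club hcof hD).mono
      (fun α ⟨hαS, hαD⟩ => ⟨fun h => hDE α hαD ((hagree α (hDC hαD)).1 h), hαS⟩)
      fun α hα => hS.1 hα.2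

theorem stmt4 (κ : Cardinal) (hreg : κ.IsRegular) (hunc : Cardinal.aleph0 < κ)
    (S : Set Ordinal) (hS : IsStatIn κ S)
    (C : Set Ordinal) (hC : IsClubIn κ C)
    (Eα : Ordinal → (Ordinal → Ordinal) → (Ordinal → Ordinal) → Prop)
    (x : Ordinal → Ordinal → Set (Ordinal → Ordinal))
    (hEquiv : ∀ α ∈ C, Equivalence (Eα α))
    (hpart : ∀ α ∈ C, ∀ η, ∃! i, 0 < i ∧ i < κ.ord ∧ η ∈ x α i)
    (hclasses : ∀ α ∈ C, ∀ η ξ, Eα α η ξ ↔ ∃ i, 0 < i ∧ i < κ.ord ∧ η ∈ x α i ∧ ξ ∈ x α i)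
    (E : (Ordinal → Ordinal) → (Ordinal → Ordinal) → Prop)
    (hEpos : ∀ η ξ, E η ξ ↔ ∃ D, IsClubIn κ D ∧ D ⊆ C ∧ ∀ α ∈ D, Eα α η ξ)
    (hEneg : ∀ η ξ, ¬ E η ξ ↔ ∃ D, IsClubIn κ D ∧ D ⊆ C ∧ ∀ α ∈ D, ¬ Eα α η ξ)
    (F : (Ordinal → Ordinal) → (Ordinal → Ordinal))
    (hF : ∀ η α i, α ∈ C → 0 < i → i < κ.ord → η ∈ x α i → F η α = i)
    (hF0 : ∀ η α, α ∉ C → F η α = 0) :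
    ∀ η ξ, E η ξ ↔ eqModS κ S (F η) (F ξ) :=
  stmt4_general κ hreg hunc S hS C Eα x hpart hclasses E hEpos hEneg F hF
end

section
/- Let κ be regular uncountable and let T be a tree whose nodes are functions η : s → κ^m (s ≤ γ, for fixed m and γ < κ), with coordinate functions η_1,…,η_m. Suppose the filtration T^α = {η ∈ T : ran(η) ⊆ ϑ^m for some ϑ < α} is given. If η ∈ T and β is an ordinal such that sup{τ' : sup(ran(η_m ↾ τ')) < β} = τ with τ < dom(η), sup(ran(η_m ↾ τ)) ≤ β, and η↾τ ∉ acc(T^β) \ T^β, then: (1) η↾τ ∈ T^β; (2) η↾(τ+1) ∉ T^β. -/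
open Classical in
/-- Restriction of a node `p = (s, η)` (with domain length `s`) to length `τ`. -/
noncomputable def restrP (m : ℕ) (p : Ordinal × (Ordinal → Fin m → Ordinal)) (τ : Ordinal) :
    Ordinal × (Ordinal → Fin m → Ordinal) :=
  (τ, fun i k => if i < τ then p.2 i k else 0)

/-- The filtration level `T^β`: nodes whose range is contained in `ϑ^m` for some `ϑ < β`. -/
def filtLevel (m : ℕ) (T : Set (Ordinal × (Ordinal → Fin m → Ordinal))) (β : Ordinal) :
    Set (Ordinal × (Ordinal → Fin m → Ordinal)) :=
  {p ∈ T | ∃ ϑ < β, ∀ i < p.1, ∀ k, p.2 i k < ϑ}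

/-- `acc B`: limits (accumulation points) of branches of `B`: all proper restrictions lie in `B`. -/
def accSet (m : ℕ) (B : Set (Ordinal × (Ordinal → Fin m → Ordinal))) :
    Set (Ordinal × (Ordinal → Fin m → Ordinal)) :=
  {p | ∀ τ, τ < p.1 → restrP m p τ ∈ B}

/-!
For `τ' < τ` pick `τ''` in the set whose supremum is `τ` with `τ' < τ''`. Every `i < τ'` has
`i + 1 < τ''`, so, `η_m` being strictly increasing and dominating the other coordinates, all
values of `η ↾ τ'` lie below `sup ran(η_m ↾ τ'') < β`. Hence `η ↾ τ ∈ acc(T^β)`, and the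
hypothesis on `acc(T^β) \ T^β` gives `η ↾ τ ∈ T^β`. A bound `ϑ < β` for `η ↾ (τ + 1)` would put
`τ + 1` into that set, which is impossible as its supremum is `τ`.
-/

open Set

theorem restrP_restrP {m : ℕ} (p : Ordinal × (Ordinal → Fin m → Ordinal)) {τ τ' : Ordinal}
    (h : τ' ≤ τ) : restrP m (restrP m p τ) τ' = restrP m p τ' := by
  ext i k
  · rfl
  · by_cases hi : i < τ'
    · simp [restrP, hi, hi.trans_le h]
    · simp [restrP, hi]

theorem restrP_mem_filtLevel_iff {m : ℕ} {T : Set (Ordinal × (Ordinal → Fin m → Ordinal))}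
    {β : Ordinal} (p : Ordinal × (Ordinal → Fin m → Ordinal)) (τ : Ordinal) :
    restrP m p τ ∈ filtLevel m T β ↔ restrP m p τ ∈ T ∧ ∃ ϑ < β, ∀ i < τ, ∀ k, p.2 i k < ϑ := by
  refine and_congr_right fun _ => exists_congr fun ϑ => and_congr_right fun _ =>
    forall₂_congr fun i hi => forall_congr' fun k => ?_
  simp only [restrP, if_pos (show i < τ from hi)]

def cutSet {m : ℕ} (η : Ordinal × (Ordinal → Fin m → Ordinal)) (c : Fin m) (β : Ordinal) :
    Set Ordinal :=
  {τ' | τ' ≤ η.1 ∧ sSup ((fun i => η.2 i c) '' Iio τ') < β}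

section Cut

variable {m : ℕ} {T : Set (Ordinal × (Ordinal → Fin m → Ordinal))}
  {η : Ordinal × (Ordinal → Fin m → Ordinal)} {c : Fin m} {β τ : Ordinal}

theorem bddAbove_cutSet : BddAbove (cutSet η c β) :=
  ⟨η.1, fun _ h => h.1⟩

theorem bddAbove_image_Iio (hmono : ∀ i j, i < j → j < η.1 → η.2 i c < η.2 j c) {a : Ordinal}
    (ha : a < η.1) : BddAbove ((fun i => η.2 i c) '' Iio a) := by
  refine ⟨η.2 a c, ?_⟩
  rintro _ ⟨i, hi, rfl⟩
  exact (hmono i a hi ha).le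

theorem restrP_mem_accSet_filtLevel (hclosed : ∀ p ∈ T, ∀ τ, τ ≤ p.1 → restrP m p τ ∈ T)
    (hη : η ∈ T) (hmono : ∀ i j, i < j → j < η.1 → η.2 i c < η.2 j c)
    (hdomin : ∀ i, i < η.1 → ∀ k, η.2 i k ≤ η.2 i c) (hτ : τ = sSup (cutSet η c β))
    (hτlt : τ < η.1) : restrP m η τ ∈ accSet m (filtLevel m T β) := by
  intro τ' (hτ' : τ' < τ)
  obtain ⟨τ'', ⟨hτ''η, hτ''β⟩, hτ'τ''⟩ := exists_lt_of_lt_csSup' (hτ ▸ hτ')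
  rw [restrP_restrP η hτ'.le, restrP_mem_filtLevel_iff]
  refine ⟨hclosed η hη τ' (hτ'τ''.le.trans hτ''η), _, hτ''β, fun i hi k => ?_⟩
  have hi1 : i + 1 < τ'' := (Order.add_one_le_of_lt hi).trans_lt hτ'τ''
  have hi1η : i + 1 < η.1 := hi1.trans_le hτ''η
  have hτ''τ : τ'' ≤ τ := hτ ▸ le_csSup bddAbove_cutSet ⟨hτ''η, hτ''β⟩
  calc η.2 i k ≤ η.2 i c := hdomin i ((lt_add_one i).trans hi1η) k
    _ < η.2 (i + 1) c := hmono i (i + 1) (lt_add_one i) hi1η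
    _ ≤ _ := le_csSup (bddAbove_image_Iio hmono (hτ''τ.trans_lt hτlt)) ⟨i + 1, hi1, rfl⟩

theorem restrP_add_one_not_mem_filtLevel (hτ : τ = sSup (cutSet η c β)) (hτlt : τ < η.1) :
    restrP m η (τ + 1) ∉ filtLevel m T β := by
  rw [restrP_mem_filtLevel_iff]
  rintro ⟨-, ϑ, hϑβ, hϑ⟩
  have hmem : τ + 1 ∈ cutSet η c β := by
    refine ⟨Order.add_one_le_of_lt hτlt, (csSup_le' ?_).trans_lt hϑβ⟩
    rintro _ ⟨i, hi, rfl⟩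
    exact (hϑ i hi c).le
  have hle := le_csSup bddAbove_cutSet hmem
  rw [← hτ] at hle
  exact (lt_add_one τ).not_ge hle

end Cut

theorem stmt10 (m : ℕ) (hm : 0 < m)
    (T : Set (Ordinal × (Ordinal → Fin m → Ordinal)))
    (hclosed : ∀ p ∈ T, ∀ τ, τ ≤ p.1 → restrP m p τ ∈ T)
    (η : Ordinal × (Ordinal → Fin m → Ordinal)) (hη : η ∈ T)
    (β τ : Ordinal)
    -- the m-th coordinate η_m is (strictly) increasing
    (hmono : ∀ i j, i < j → j < η.1 → η.2 i ⟨m - 1, by omega⟩ < η.2 j ⟨m - 1, by omega⟩)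
    -- the sup of the range of η_m controls the other coordinates
    (hdomin : ∀ i, i < η.1 → ∀ k, η.2 i k ≤ η.2 i ⟨m - 1, by omega⟩)
    -- τ = sup{τ' : sup(ran(η_m ↾ τ')) < β}
    (hτ : τ = sSup {τ' | τ' ≤ η.1 ∧
      sSup ((fun i => η.2 i ⟨m - 1, by omega⟩) '' Set.Iio τ') < β})
    (hτlt : τ < η.1)
    -- η↾τ ∉ acc(T^β) \ T^β
    (hnacc : restrP m η τ ∉ accSet m (filtLevel m T β) \ filtLevel m T β) :
    restrP m η τ ∈ filtLevel m T β ∧ restrP m η (τ + 1) ∉ filtLevel m T β := by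
  have hacc : restrP m η τ ∈ accSet m (filtLevel m T β) :=
    restrP_mem_accSet_filtLevel hclosed hη hmono hdomin hτ hτlt
  exact ⟨not_not.mp fun h => hnacc ⟨hacc, h⟩, restrP_add_one_not_mem_filtLevel hτ hτlt⟩
end
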